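/- arXiv:2110.13302 — 2 statements merged into one kernel-verified Lean document; each statement's English description precedes it below -/
import Mathlib

section
/- Given a strictly increasing sequence of real numbers r = (R_j)_{j≥1} with R_1 > p and R_j → ∞, and a sequence (δ_j)_{j≥1} with δ_j > 0 for all j, there exists a generic sequence of radii r' = (R'_j)_{j≥1} such that |R_j − R'_j| < δ_j for all j. -/
noncomputable section

/-- `K` is a model of `ℂ_p`, the completion of an algebraic closure of `ℚ_p`:
it is a complete, algebraically closed, nonarchimedean normed field whose norm
extends the `p`-adic absolute value and in which the algebraic elements over
`ℚ_p` are dense. -/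
structure IsCp (p : ℕ) [Fact p.Prime] (K : Type*) [NormedField K] [Algebra ℚ_[p] K] : Prop where
  complete : CompleteSpace K
  norm_extends : ∀ x : ℚ_[p], ‖algebraMap ℚ_[p] K x‖ = ‖x‖
  isAlgClosed : IsAlgClosed K
  dense_algebraic : Dense {x : K | IsAlgebraic ℚ_[p] x}
  isNonarch : ∀ x y : K, ‖x + y‖ ≤ max ‖x‖ ‖y‖

/-- `ϱ = p^{-1/(p-1)}`. -/
def rho (p : ℕ) : ℝ := (p : ℝ) ^ (-1 / ((p : ℝ) - 1))

/-- `R` is a sequence of radii: strictly increasing (for indices `≥ 1`),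
with `R 1 > p`, tending to infinity. -/
def IsRadii (p : ℕ) (R : ℕ → ℝ) : Prop :=
  (∀ j, 1 ≤ j → R j < R (j + 1)) ∧ (p : ℝ) < R 1 ∧
    Filter.Tendsto R Filter.atTop Filter.atTop

/-- The piecewise-monomial map `φ`: for `R_{j-1} < t ≤ R_j` (with `R_0 := 0`),
`φ(t) = p (R_1 ⋯ R_{j-1})⁻¹ t^{p+j-1}`. -/
def phi (p : ℕ) (R : ℕ → ℝ) (t : ℝ) : ℝ :=
  let j := sInf {j : ℕ | 1 ≤ j ∧ t ≤ R j}
  (p : ℝ) * (∏ i ∈ Finset.Icc 1 (j - 1), R i)⁻¹ * t ^ (p + j - 1)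

/-- A generic sequence of radii. -/
def IsGenericRadii (p : ℕ) (R : ℕ → ℝ) : Prop :=
  IsRadii p R ∧ ∀ i j n : ℕ, 1 ≤ i → i < j → 1 ≤ n → (phi p R)^[n] (R i) ≠ R j

/-- Membership in the parameter space `C(r)`: `|c_j| = R_j` for all `j ≥ 1`. -/
def InC (p : ℕ) [Fact p.Prime] {K : Type*} [NormedField K] (R : ℕ → ℝ) (c : ℕ → K) : Prop :=
  ∀ j, 1 ≤ j → ‖c j‖ = R j

/-- The transcendental entire map `f_c(z) = (z^p/p) ∏_{j ≥ 1} (1 - z/c_j)`. -/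
def fc (p : ℕ) {K : Type*} [NormedField K] (c : ℕ → K) (z : K) : K :=
  z ^ p / (p : K) * ∏' j : ℕ, (1 - z / c (j + 1))

/-- The disk `B_0 = {|z| < 1}` for `j = 0`, and `B_j = {|z - c_j| < R_j}` for `j ≥ 1`. -/
def Bset {K : Type*} [NormedField K] (R : ℕ → ℝ) (c : ℕ → K) (j : ℕ) : Set K :=
  if j = 0 then {z : K | ‖z‖ < 1} else {z : K | ‖z - c j‖ < R j}

/-- The set `A`, complement of all the disks `B_j`, `j ≥ 0`. -/
def Aset {K : Type*} [NormedField K] (R : ℕ → ℝ) (c : ℕ → K) : Set K :=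
  (⋃ j, Bset R c j)ᶜ

/-- `n_j`, the minimal `n ≥ 1` with `R_j < φ^{∘(n+1)}(1)`. -/
def nseq (p : ℕ) (R : ℕ → ℝ) (j : ℕ) : ℕ :=
  sInf {n : ℕ | 1 ≤ n ∧ R j < (phi p R)^[n + 1] 1}

/-- `S_j = φ⁻¹(R_j)`. -/
def Sse (p : ℕ) (R : ℕ → ℝ) (j : ℕ) : ℝ := Function.invFun (phi p R) (R j)

/-- `λ_j = φ(R_j)/R_j`. -/
def lam (p : ℕ) (R : ℕ → ℝ) (j : ℕ) : ℝ := phi p R (R j) / R j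

/-- `L_k`: index of the first symbol of the `k`-th block `B_0^{m_k} A^{n_k} B_k^{…}`
of the itinerary `α(m, ℓ)`; `L_1 = 0` and `L_{k+1} = L_k + m_k + n_k + ℓ_{k+1}`. -/
def Lseq (m n l : ℕ → ℕ) : ℕ → ℕ
  | 0 => 0
  | 1 => 0
  | k + 2 => Lseq m n l (k + 1) + m (k + 1) + n (k + 1) + l (k + 2)

/-- `N_k = L_k + m_k + n_k`, the index of the final symbol `B_k` of the truncated
itinerary `α^{(k)}` (so `α^{(k)}` has length `N_k + 1`). -/
def Nseq (m n l : ℕ → ℕ) (k : ℕ) : ℕ := Lseq m n l k + m k + n k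

/-- The symbol (`some 0 = B_0`, `none = A`, `some k = B_k`) at position `i` of the
itinerary `α(m,ℓ) = B_0^{m_1} A^{n_1} B_1^{ℓ_2} B_0^{m_2} A^{n_2} B_2^{ℓ_3} ⋯`. -/
def itin (m n l : ℕ → ℕ) (i : ℕ) : Option ℕ :=
  let k := sSup {k : ℕ | 1 ≤ k ∧ Lseq m n l k ≤ i}
  if i < Lseq m n l k + m k then some 0
  else if i < Lseq m n l k + m k + n k then none
  else some k

/-- The subset of `ℂ_p` corresponding to a symbol of the alphabet `{A, B_0, B_1, …}`. -/
def symbSet {K : Type*} [NormedField K] (R : ℕ → ℝ) (c : ℕ → K) : Option ℕ → Set K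
  | none => Aset R c
  | some j => Bset R c j

/-- Condition (3.2) at `k`: `ϱ⁻¹ R_k p^{-m_k} λ_k^{ℓ_{k+1}} < 1`. -/
def Cond32 (p : ℕ) (R : ℕ → ℝ) (m l : ℕ → ℕ) (k : ℕ) : Prop :=
  (rho p)⁻¹ * R k * ((p : ℝ) ^ m k)⁻¹ * lam p R k ^ l (k + 1) < 1

/-- Condition (3.3) for `k`: for all `2 ≤ j < k`,
`ε_k < ϱ^{k-j} R_k² (R_{j-1} S_{j-1})⁻¹ λ_{j-1}^{-ℓ_j}`. -/
def Cond33 (p : ℕ) (R : ℕ → ℝ) (ε : ℕ → ℝ) (l : ℕ → ℕ) (k : ℕ) : Prop :=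
  ∀ j, 2 ≤ j → j < k →
    ε k < rho p ^ (k - j) * R k ^ 2 * (R (j - 1) * Sse p R (j - 1))⁻¹ *
      (lam p R (j - 1) ^ l j)⁻¹

/-- Condition (3.4) for `k`: for all `2 ≤ j ≤ k`,
`ϱ^{-2} R_{j-1} S_{j-1} λ_{j-1}^{ℓ_j} p^{-m_j} < 1`. -/
def Cond34 (p : ℕ) (R : ℕ → ℝ) (m l : ℕ → ℕ) (k : ℕ) : Prop :=
  ∀ j, 2 ≤ j → j ≤ k →
    ((rho p) ^ 2)⁻¹ * (R (j - 1) * Sse p R (j - 1)) * lam p R (j - 1) ^ l j *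
      ((p : ℝ) ^ m j)⁻¹ < 1

/-- Condition (3.5) at `k`: `p ϱ⁻¹ R_{k+1}² S_k⁻¹ λ_k^{-ℓ_{k+1}} < ε_{k+1}`. -/
def Cond35 (p : ℕ) (R : ℕ → ℝ) (ε : ℕ → ℝ) (l : ℕ → ℕ) (k : ℕ) : Prop :=
  (p : ℝ) * (rho p)⁻¹ * R (k + 1) ^ 2 * (Sse p R k)⁻¹ * (lam p R k ^ l (k + 1))⁻¹ < ε (k + 1)

/-- `c' ∈ Δ_k(c, ε)`. -/
def InDelta (p : ℕ) [Fact p.Prime] {K : Type*} [NormedField K] (R : ℕ → ℝ) (c : ℕ → K)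
    (ε : ℕ → ℝ) (k : ℕ) (c' : ℕ → K) : Prop :=
  InC p R c' ∧ (∀ j, 1 ≤ j → j < k → c' j = c j) ∧ ∀ j, k ≤ j → ‖c' j - c j‖ < ε j

/-- `c' ∈ U_k(c, ε)`. -/
def InU (p : ℕ) [Fact p.Prime] {K : Type*} [NormedField K] (R : ℕ → ℝ) (c : ℕ → K)
    (k : ℕ) (ε : ℝ) (c' : ℕ → K) : Prop :=
  InC p R c' ∧ ‖c' k - c k‖ < ε ∧ ∀ j, 1 ≤ j → j ≠ k → c' j = c j


open Classical in
noncomputable def pickVal (lo hi : ℝ) (bad : Set ℝ) : ℝ :=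
  if h : (Set.Ioo lo hi \ bad).Nonempty then h.choose else lo

lemma pickVal_mem {lo hi : ℝ} {bad : Set ℝ} (hlt : lo < hi) (hc : bad.Countable) :
    pickVal lo hi bad ∈ Set.Ioo lo hi \ bad := by
  have hne : (Set.Ioo lo hi \ bad).Nonempty := by
    obtain ⟨x, hx1, hx2⟩ := (hc.dense_compl ℝ).exists_mem_open isOpen_Ioo (Set.nonempty_Ioo.2 hlt)
    exact ⟨x, hx2, hx1⟩
  rw [pickVal, dif_pos hne]; exact hne.choose_spec


lemma phi_eq (p : ℕ) (R : ℕ → ℝ) (t : ℝ) :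
    phi p R t = (p : ℝ) * (∏ i ∈ Finset.Icc 1 (sInf {j : ℕ | 1 ≤ j ∧ t ≤ R j} - 1), R i)⁻¹ *
      t ^ (p + sInf {j : ℕ | 1 ≤ j ∧ t ≤ R j} - 1) := rfl

def extFn (g : ℕ → ℝ) (j M : ℕ) : ℕ → ℝ := fun k => if k < j then g k else (M : ℝ) + k

def badSet (p : ℕ) (g : ℕ → ℝ) (j : ℕ) : Set ℝ :=
  Set.range fun q : ℕ × ℕ × ℕ => (phi p (extFn g j q.2.2))^[q.1] (extFn g j 0 q.2.1)

lemma badSet_congr {p j : ℕ} {g g' : ℕ → ℝ} (h : ∀ k, k < j → g k = g' k) :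
    badSet p g j = badSet p g' j := by
  have he : ∀ M, extFn g j M = extFn g' j M := by
    intro M; funext k
    simp only [extFn]
    split
    · exact h k ‹_›
    · rfl
  simp only [badSet, he]

noncomputable def genSeq (p : ℕ) (R δ : ℕ → ℝ) (j : ℕ) : ℝ :=
  pickVal (R j) (min (R j + min (δ j) 1) (R (j + 1)))
    (badSet p (fun k => if _h : k < j then genSeq p R δ k else 0) j)
termination_by j

lemma genSeq_eq (p : ℕ) (R δ : ℕ → ℝ) (j : ℕ) :
    genSeq p R δ j = pickVal (R j) (min (R j + min (δ j) 1) (R (j + 1)))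
      (badSet p (genSeq p R δ) j) := by
  rw [genSeq]
  congr 1
  exact badSet_congr fun k hk => dif_pos hk




lemma lt_phi (p : ℕ) (hp2 : 2 ≤ p) (R : ℕ → ℝ)
    (hmono : ∀ i k, 1 ≤ i → i ≤ k → R i ≤ R k) (hR1 : 1 < R 1)
    (htend : Filter.Tendsto R Filter.atTop Filter.atTop) {t : ℝ} (ht : 1 < t) :
    t < phi p R t := by
  have htpos : (0 : ℝ) < t := by linarith
  set S := {j : ℕ | 1 ≤ j ∧ t ≤ R j} with hS
  have hSne : S.Nonempty := by
    obtain ⟨k, hk1, hk2⟩ := ((Filter.eventually_ge_atTop 1).and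
      (htend.eventually_ge_atTop t)).exists
    exact ⟨k, hk1, hk2⟩
  set a := sInf S with ha
  obtain ⟨ha1, hta⟩ := Nat.sInf_mem hSne
  have hlt : ∀ i ∈ Finset.Icc 1 (a - 1), R i < t := by
    intro i hi
    simp only [Finset.mem_Icc] at hi
    have hia : i < a := by omega
    have := Nat.notMem_of_lt_sInf (by rw [← ha]; exact hia)
    rw [hS] at this
    simp only [Set.mem_setOf_eq, not_and, not_le] at this
    exact this hi.1
  have hpos : ∀ i ∈ Finset.Icc 1 (a - 1), 0 < R i := by
    intro i hi
    simp only [Finset.mem_Icc] at hi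
    calc (0:ℝ) < 1 := one_pos
    _ < R 1 := hR1
    _ ≤ R i := hmono 1 i le_rfl hi.1
  have hprodpos : 0 < ∏ i ∈ Finset.Icc 1 (a - 1), R i := Finset.prod_pos hpos
  have hprodle : ∏ i ∈ Finset.Icc 1 (a - 1), R i ≤ t ^ (a - 1) := by
    calc ∏ i ∈ Finset.Icc 1 (a - 1), R i ≤ ∏ _i ∈ Finset.Icc 1 (a - 1), t :=
          Finset.prod_le_prod (fun i hi => (hpos i hi).le) (fun i hi => (hlt i hi).le)
    _ = t ^ (a - 1) := by rw [Finset.prod_const, Nat.card_Icc, Nat.add_sub_cancel]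
  have h1 : (p : ℝ) * (t ^ (a - 1))⁻¹ * t ^ (p + a - 1) ≤ phi p R t := by
    rw [phi_eq]
    have hinv : (t ^ (a - 1))⁻¹ ≤ (∏ i ∈ Finset.Icc 1 (a - 1), R i)⁻¹ :=
      inv_anti₀ hprodpos hprodle
    have hpnn : (0:ℝ) ≤ (p : ℝ) := by positivity
    exact mul_le_mul_of_nonneg_right (mul_le_mul_of_nonneg_left hinv hpnn)
      (pow_nonneg htpos.le _)
  have hexp : p + a - 1 = (a - 1) + p := by omega
  have h2 : (p : ℝ) * (t ^ (a - 1))⁻¹ * t ^ (p + a - 1) = p * t ^ p := by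
    rw [hexp, pow_add]
    field_simp
  have h3 : t < (p : ℝ) * t ^ p := by
    have hp2' : (2 : ℝ) ≤ p := by exact_mod_cast hp2
    have ht2 : t ^ 2 ≤ t ^ p := pow_le_pow_right₀ ht.le hp2
    nlinarith [sq_nonneg t]
  linarith [h2 ▸ h1]

lemma phi_ext_eq {p : ℕ} {R' : ℕ → ℝ} {j M : ℕ} (hj : 1 ≤ j) (hM : R' j ≤ (M : ℝ) + j)
    {t : ℝ} (ht : t ≤ R' j) : phi p (extFn R' j M) t = phi p R' t := by
  have hjS1 : j ∈ {k : ℕ | 1 ≤ k ∧ t ≤ R' k} := ⟨hj, ht⟩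
  have hEj : extFn R' j M j = (M : ℝ) + j := by simp [extFn]
  have hjS2 : j ∈ {k : ℕ | 1 ≤ k ∧ t ≤ extFn R' j M k} := ⟨hj, by rw [hEj]; linarith⟩
  have hab : sInf {k : ℕ | 1 ≤ k ∧ t ≤ extFn R' j M k} = sInf {k : ℕ | 1 ≤ k ∧ t ≤ R' k} := by
    set a := sInf {k : ℕ | 1 ≤ k ∧ t ≤ R' k} with ha
    set b := sInf {k : ℕ | 1 ≤ k ∧ t ≤ extFn R' j M k} with hb
    obtain ⟨ha1, hta⟩ := Nat.sInf_mem ⟨j, hjS1⟩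
    obtain ⟨hb1, htb⟩ := Nat.sInf_mem ⟨j, hjS2⟩
    have haj : a ≤ j := Nat.sInf_le hjS1
    have hbj : b ≤ j := Nat.sInf_le hjS2
    have h1 : b ≤ a := by
      rcases lt_or_eq_of_le haj with h | h
      · exact Nat.sInf_le ⟨ha1, by rwa [show extFn R' j M a = R' a by simp [extFn, h]]⟩
      · rw [h]; exact hbj
    have h2 : a ≤ b := by
      rcases lt_or_eq_of_le hbj with h | h
      · refine Nat.sInf_le ⟨hb1, ?_⟩
        rwa [show extFn R' j M b = R' b from by simp [extFn, h]] at htb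
      · rw [h]; exact haj
    omega
  rw [phi_eq, phi_eq, hab]
  congr 2
  refine congrArg _ (Finset.prod_congr rfl ?_)
  intro i hi
  simp only [Finset.mem_Icc] at hi
  have : i < j := by
    have := Nat.sInf_le hjS1
    omega
  simp [extFn, this]

lemma genSeq_mem (p : ℕ) (R δ : ℕ → ℝ) (j : ℕ)
    (h : R j < min (R j + min (δ j) 1) (R (j + 1))) :
    genSeq p R δ j ∈ Set.Ioo (R j) (min (R j + min (δ j) 1) (R (j + 1))) \
      badSet p (genSeq p R δ) j := by
  rw [genSeq_eq]
  exact pickVal_mem h (Set.countable_range _)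

/-- **Lemma 3.2** (existence of generic radii). Any sequence of radii can be perturbed,
by less than any prescribed positive `δ_j` at each index, to a generic sequence of radii. -/
theorem generic_radii_exist
    (p : ℕ) [Fact p.Prime] (R : ℕ → ℝ) (hR : IsRadii p R)
    (δ : ℕ → ℝ) (hδ : ∀ j, 1 ≤ j → 0 < δ j) :
    ∃ R' : ℕ → ℝ, IsGenericRadii p R' ∧ ∀ j, 1 ≤ j → |R j - R' j| < δ j := by
  obtain ⟨hRmono, hRp, hRtend⟩ := hR
  have hp2 : 2 ≤ p := (Fact.out : p.Prime).two_le
  set R' := genSeq p R δ with hR'def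
  have hlohi : ∀ j, 1 ≤ j → R j < min (R j + min (δ j) 1) (R (j + 1)) := by
    intro j hj
    exact lt_min (by have := hδ j hj; have : 0 < min (δ j) 1 := lt_min this one_pos; linarith)
      (hRmono j hj)
  have hmem : ∀ j, 1 ≤ j → R' j ∈ Set.Ioo (R j) (min (R j + min (δ j) 1) (R (j + 1))) \
      badSet p R' j := fun j hj => genSeq_mem p R δ j (hlohi j hj)
  have hlow : ∀ j, 1 ≤ j → R j < R' j := fun j hj => (hmem j hj).1.1
  have hhigh : ∀ j, 1 ≤ j → R' j < min (R j + min (δ j) 1) (R (j + 1)) :=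
    fun j hj => (hmem j hj).1.2
  have hstep : ∀ j, 1 ≤ j → R' j < R' (j + 1) := by
    intro j hj
    calc R' j < min (R j + min (δ j) 1) (R (j + 1)) := hhigh j hj
    _ ≤ R (j + 1) := min_le_right _ _
    _ < R' (j + 1) := hlow (j + 1) (by omega)
  have hmono : ∀ i k, 1 ≤ i → i ≤ k → R' i ≤ R' k := by
    intro i k h1 hik
    induction k, hik using Nat.le_induction with
    | base => exact le_rfl
    | succ k hk ih => exact ih.trans (hstep k (h1.trans hk)).le
  have hRp' : (p : ℝ) < R' 1 := hRp.trans (hlow 1 le_rfl)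
  have h1R1 : (1 : ℝ) < R' 1 := by
    have : (1 : ℝ) ≤ p := by exact_mod_cast Nat.one_le_of_lt hp2
    linarith
  have htend' : Filter.Tendsto R' Filter.atTop Filter.atTop := by
    refine Filter.tendsto_atTop_mono' Filter.atTop ?_ hRtend
    filter_upwards [Filter.eventually_ge_atTop 1] with j hj
    exact (hlow j hj).le
  refine ⟨R', ⟨⟨hstep, hRp', htend'⟩, ?_⟩, ?_⟩
  · -- genericity
    intro i j n h1i hij h1n heq
    have hj1 : 1 ≤ j := h1i.trans hij.le
    have hA : ∀ t : ℝ, 1 < t → t < phi p R' t :=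
      fun t ht => lt_phi p hp2 R' hmono h1R1 htend' ht
    set T : ℕ → ℝ := fun m => (phi p R')^[m] (R' i) with hT
    have hTs : ∀ m, T (m + 1) = phi p R' (T m) := fun m =>
      Function.iterate_succ_apply' _ _ _
    have hgt1 : ∀ m, 1 < T m := by
      intro m
      induction m with
      | zero =>
        have : R' 1 ≤ R' i := hmono 1 i le_rfl h1i
        show (1:ℝ) < R' i
        linarith
      | succ m ih => rw [hTs]; exact ih.trans (hA _ ih)
    have hTmono : StrictMono T := strictMono_nat_of_lt_succ fun m => by
      rw [hTs]; exact hA _ (hgt1 m)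
    have hle : ∀ m, m ≤ n → T m ≤ R' j := by
      intro m hm
      calc T m ≤ T n := hTmono.monotone hm
      _ = R' j := heq
    obtain ⟨M, hM⟩ := exists_nat_ge (R' j)
    have hMj : R' j ≤ (M : ℝ) + j := by
      have : (0:ℝ) ≤ j := Nat.cast_nonneg j
      linarith
    have hEit : ∀ m, m ≤ n → (phi p (extFn R' j M))^[m] (R' i) = T m := by
      intro m hm
      induction m with
      | zero => rfl
      | succ m ih =>
        rw [Function.iterate_succ_apply', ih (by omega), hTs,
          phi_ext_eq hj1 hMj (hle m (by omega))]
    have hbad : R' j ∈ badSet p R' j := by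
      refine ⟨(n, i, M), ?_⟩
      show (phi p (extFn R' j M))^[n] (extFn R' j 0 i) = R' j
      have hEi : extFn R' j 0 i = R' i := by simp [extFn, hij]
      rw [hEi, hEit n le_rfl]; exact heq
    exact (hmem j hj1).2 hbad
  · -- approximation
    intro j hj
    have h1 := hlow j hj
    have h2 := (hhigh j hj).trans_le (min_le_left _ _)
    have h3 : min (δ j) 1 ≤ δ j := min_le_left _ _
    rw [abs_sub_lt_iff]
    constructor <;> [linarith [hδ j hj]; linarith]

end
end

section
/- Let r = (R_j)_{j≥1} be a generic sequence of radii. For every c ∈ C(r): (1) every z ∈ ℂ_p with f_c(z) = z lies in B_0 ∪ ⋃_{j≥1} B_j; and (2) for each j ≥ 1 there is exactly one point w ∈ ℂ_p with |w − c_j| < R_j and f_c(w) = w, and this fixed point is repelling with multiplier of absolute value |f_c'(w)| = φ(R_j)/R_j > 1. -/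
/-!
On the disk `|z - c_j| < R_j` every point has norm `R_j`, and `f_c(z) = G(z) (z - c_j)` where `G`
gathers `z^p/p` and all factors other than `1 - z/c_j`. By the ultrametric inequality, on that disk
`|G| ≡ κ := φ(R_j)/R_j > 1` and `G` is `κ/R_j`-Lipschitz, because a product of factors that are
bounded by `M_i` and `M_i/ρ`-Lipschitz on `|z| ≤ ρ` is bounded by `∏ M_i` and `(∏ M_i)/ρ`-Lipschitz.
Hence `f_c` multiplies distances by exactly `κ` on the disk of radius `R_j/κ` around `c_j`, which
contains every fixed point lying in `B_j`, while `w ↦ w - (f_c w - w)/(G(c_j) - 1)` is a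
`κ⁻¹`-contraction of it: this gives existence, uniqueness, and `|f_c'(w)| = κ`. The same estimates
on the tails of the product show that `f_c` is differentiable. Outside all the disks every factor
has norm at least `1`, so `|f_c(z)| ≥ p |z|^p > |z|`.
-/

noncomputable section

open Filter Topology Metric Finset IsUltrametricDist

section Ultrametric

variable {K : Type*} [NormedField K] [IsUltrametricDist K]

theorem norm_prod_sub_one_le {ι : Type*} (s : Finset ι) {f : ι → K} {δ : ℝ} (hδ₀ : 0 ≤ δ)
    (hδ₁ : δ ≤ 1) (hf : ∀ i ∈ s, ‖f i - 1‖ ≤ δ) : ‖∏ i ∈ s, f i - 1‖ ≤ δ := by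
  classical
  induction s using Finset.induction_on with
  | empty => simpa using hδ₀
  | insert a s ha ih =>
    have hs : ‖∏ i ∈ s, f i - 1‖ ≤ δ := ih fun i hi ↦ hf i (mem_insert_of_mem hi)
    have hs₁ : ‖∏ i ∈ s, f i‖ ≤ 1 := by
      simpa using (norm_add_le_max (∏ i ∈ s, f i - 1) 1).trans (by simp [hs.trans hδ₁])
    rw [prod_insert ha, show f a * ∏ i ∈ s, f i - 1
      = (f a - 1) * ∏ i ∈ s, f i + (∏ i ∈ s, f i - 1) by ring]
    refine (norm_add_le_max _ _).trans (max_le ?_ hs)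
    rw [norm_mul]
    exact (mul_le_mul (hf a (mem_insert_self a s)) hs₁ (norm_nonneg _) hδ₀).trans_eq (mul_one δ)

theorem norm_eq_of_norm_sub_lt {x y : K} (h : ‖x - y‖ < ‖y‖) : ‖x‖ = ‖y‖ := by
  have := norm_add_eq_max_of_norm_ne_norm h.ne
  rwa [sub_add_cancel, max_eq_right h.le] at this

theorem norm_eq_one_of_norm_sub_one_lt_one {x : K} (h : ‖x - 1‖ < 1) : ‖x‖ = 1 :=
  (norm_eq_of_norm_sub_lt (h.trans_eq norm_one.symm)).trans norm_one

theorem multipliable_of_tendsto_cofinite_one [CompleteSpace K] {ι : Type*} {f : ι → K}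
    (hf : Tendsto f cofinite (𝓝 1)) : Multipliable f := by
  classical
  have hsmall : ∀ δ > 0, {i | δ ≤ ‖f i - 1‖}.Finite := fun δ hδ ↦ by
    simpa [← dist_eq_norm] using eventually_cofinite.mp (hf.eventually (ball_mem_nhds 1 hδ))
  set S := (hsmall 1 one_pos).toFinset
  set C := ‖∏ i ∈ S, f i‖
  have hC : ∀ t, S ⊆ t → ‖∏ i ∈ t, f i‖ = C := fun t ht ↦ by
    simp only [C, norm_prod]
    refine (prod_subset ht fun i _ hi ↦ norm_eq_one_of_norm_sub_one_lt_one ?_).symm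
    simpa [S] using hi
  obtain ⟨a, ha⟩ : ∃ a, Tendsto (fun t : Finset ι ↦ ∏ i ∈ t, f i) atTop (𝓝 a) := by
    refine cauchySeq_tendsto_of_complete (Metric.cauchySeq_iff'.mpr fun ε hε ↦ ?_)
    set δ := min (ε / (C + 1)) 1
    have hδ : 0 < δ := by positivity
    set T := (hsmall δ hδ).toFinset
    have hT : ∀ i ∉ T, ‖f i - 1‖ < δ := fun i hi ↦ by simpa [T] using hi
    have hST : S ⊆ T := fun i hi ↦ by_contra fun hiT ↦
      (hT i hiT).not_ge ((min_le_right _ _).trans (by simpa [S] using hi))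
    refine ⟨T, fun t ht ↦ ?_⟩
    have htail : ‖∏ i ∈ t \ T, f i - 1‖ ≤ δ :=
      norm_prod_sub_one_le _ hδ.le (min_le_right _ _) fun i hi ↦ (hT i (mem_sdiff.1 hi).2).le
    rw [dist_eq_norm, ← prod_sdiff ht, ← sub_one_mul, norm_mul, hC T hST]
    calc ‖∏ i ∈ t \ T, f i - 1‖ * C ≤ ε / (C + 1) * C := by
          gcongr; exact htail.trans (min_le_left _ _)
      _ < ε := by rw [div_mul_eq_mul_div, div_lt_iff₀ (by positivity)]; nlinarith
  exact ⟨a, ha⟩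

end Ultrametric

theorem Multipliable.norm_tprod_eq_prod_range {K : Type*} [NormedField K] {f : ℕ → K}
    (hf : Multipliable f) {N : ℕ} (h : ∀ i, N ≤ i → ‖f i‖ = 1) :
    ‖∏' i, f i‖ = ∏ i ∈ range N, ‖f i‖ := by
  rw [hf.norm_tprod]
  exact tprod_eq_prod fun i hi ↦ h i (by simpa using hi)

structure DiskLipBound {K : Type*} [NormedField K] (ρ M : ℝ) (g : K → K) : Prop where
  norm_le : ∀ z : K, ‖z‖ ≤ ρ → ‖g z‖ ≤ M
  lip : ∀ y z : K, ‖y‖ ≤ ρ → ‖z‖ ≤ ρ → ρ * ‖g z - g y‖ ≤ M * ‖z - y‖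

namespace DiskLipBound

variable {K : Type*} [NormedField K] {ρ M N : ℝ} {f g : K → K}

theorem mono (h : DiskLipBound ρ M g) (hM : M ≤ N) : DiskLipBound ρ N g where
  norm_le z hz := (h.norm_le z hz).trans hM
  lip y z hy hz := (h.lip y z hy hz).trans (by gcongr)

theorem const {a : K} (ha : ‖a‖ ≤ M) : DiskLipBound ρ M fun _ ↦ a where
  norm_le _ _ := ha
  lip _ _ _ _ := by simpa using mul_nonneg ((norm_nonneg a).trans ha) (norm_nonneg _)

protected theorem id : DiskLipBound ρ ρ fun z : K ↦ z where
  norm_le _ hz := hz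
  lip _ _ _ _ := le_rfl

theorem mul [IsUltrametricDist K] (hf : DiskLipBound ρ M f) (hg : DiskLipBound ρ N g) :
    DiskLipBound ρ (M * N) fun z ↦ f z * g z where
  norm_le z hz := by
    rw [norm_mul]
    exact mul_le_mul (hf.norm_le z hz) (hg.norm_le z hz) (norm_nonneg _)
      ((norm_nonneg _).trans (hf.norm_le z hz))
  lip y z hy hz := by
    have hρ : 0 ≤ ρ := (norm_nonneg y).trans hy
    have hM : 0 ≤ M := (norm_nonneg _).trans (hf.norm_le z hz)
    rw [show f z * g z - f y * g y = f z * (g z - g y) + (f z - f y) * g y by ring]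
    refine (mul_le_mul_of_nonneg_left (norm_add_le_max _ _) hρ).trans ?_
    rw [mul_max_of_nonneg _ _ hρ, norm_mul, norm_mul]
    refine max_le ?_ ?_
    · calc ρ * (‖f z‖ * ‖g z - g y‖) = ‖f z‖ * (ρ * ‖g z - g y‖) := by ring
        _ ≤ M * (N * ‖z - y‖) := mul_le_mul (hf.norm_le z hz) (hg.lip y z hy hz) (by positivity) hM
        _ = M * N * ‖z - y‖ := by ring
    · calc ρ * (‖f z - f y‖ * ‖g y‖) = (ρ * ‖f z - f y‖) * ‖g y‖ := by ring
        _ ≤ (M * ‖z - y‖) * N := mul_le_mul (hf.lip y z hy hz) (hg.norm_le y hy) (norm_nonneg _)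
            (by positivity)
        _ = M * N * ‖z - y‖ := by ring

theorem add [IsUltrametricDist K] (hf : DiskLipBound ρ M f) (hg : DiskLipBound ρ M g) :
    DiskLipBound ρ M fun z ↦ f z + g z where
  norm_le z hz := (norm_add_le_max _ _).trans (max_le (hf.norm_le z hz) (hg.norm_le z hz))
  lip y z hy hz := by
    rw [add_sub_add_comm]
    refine (mul_le_mul_of_nonneg_left (norm_add_le_max _ _) ((norm_nonneg y).trans hy)).trans ?_
    rw [mul_max_of_nonneg _ _ ((norm_nonneg y).trans hy)]
    exact max_le (hf.lip y z hy hz) (hg.lip y z hy hz)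

theorem neg (hf : DiskLipBound ρ M f) : DiskLipBound ρ M fun z ↦ -f z where
  norm_le z hz := by simpa using hf.norm_le z hz
  lip y z hy hz := by rw [neg_sub_neg, norm_sub_rev]; exact hf.lip y z hy hz

theorem sub [IsUltrametricDist K] (hf : DiskLipBound ρ M f) (hg : DiskLipBound ρ M g) :
    DiskLipBound ρ M fun z ↦ f z - g z := by
  simpa [sub_eq_add_neg] using hf.add hg.neg

theorem finsetProd [IsUltrametricDist K] {ι : Type*} (s : Finset ι) {M : ι → ℝ} {g : ι → K → K}
    (hg : ∀ i ∈ s, DiskLipBound ρ (M i) (g i)) :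
    DiskLipBound ρ (∏ i ∈ s, M i) fun z ↦ ∏ i ∈ s, g i z := by
  classical
  induction s using Finset.induction_on with
  | empty => simpa using const (ρ := ρ) (norm_one (α := K)).le
  | insert a s ha ih =>
    simp only [prod_insert ha]
    exact (hg a (mem_insert_self a s)).mul (ih fun i hi ↦ hg i (mem_insert_of_mem hi))

theorem finsetSum [IsUltrametricDist K] {ι : Type*} (s : Finset ι) {g : ι → K → K}
    (hM : 0 ≤ M) (hg : ∀ i ∈ s, DiskLipBound ρ M (g i)) :
    DiskLipBound ρ M fun z ↦ ∑ i ∈ s, g i z := by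
  classical
  induction s using Finset.induction_on with
  | empty => simpa using const (ρ := ρ) (a := (0 : K)) (by simpa using hM)
  | insert a s ha ih =>
    simp only [sum_insert ha]
    exact (hg a (mem_insert_self a s)).add (ih fun i hi ↦ hg i (mem_insert_of_mem hi))

theorem pow [IsUltrametricDist K] (n : ℕ) : DiskLipBound ρ (ρ ^ n) fun z : K ↦ z ^ n := by
  simpa using finsetProd (range n) fun _ _ ↦ DiskLipBound.id (K := K) (ρ := ρ)

theorem of_tendsto {ι : Type*} {l : Filter ι} [l.NeBot] {gs : ι → K → K}
    (hgs : ∀ᶠ n in l, DiskLipBound ρ M (gs n))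
    (hlim : ∀ z : K, ‖z‖ ≤ ρ → Tendsto (fun n ↦ gs n z) l (𝓝 (g z))) : DiskLipBound ρ M g where
  norm_le z hz := le_of_tendsto (hlim z hz).norm (hgs.mono fun _ h ↦ h.norm_le z hz)
  lip y z hy hz := le_of_tendsto (((hlim z hz).sub (hlim y hy)).norm.const_mul ρ)
    (hgs.mono fun _ h ↦ h.lip y z hy hz)

end DiskLipBound

theorem differentiableAt_of_lipschitz_approx {𝕜 E : Type*} [NontriviallyNormedField 𝕜]
    [NormedAddCommGroup E] [NormedSpace 𝕜 E] [CompleteSpace E] {f : 𝕜 → E} {fs : ℕ → 𝕜 → E}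
    {x : 𝕜} (hfs : ∀ n, DifferentiableAt 𝕜 (fs n) x)
    (hlip : ∀ ε > 0, ∀ᶠ n in atTop, ∀ᶠ y in 𝓝 x,
      ‖(f y - fs n y) - (f x - fs n x)‖ ≤ ε * ‖y - x‖) :
    DifferentiableAt 𝕜 f x := by
  set d := fun n ↦ deriv (fs n) x
  have hcauchy : CauchySeq d := Metric.cauchySeq_iff'.2 fun ε hε ↦ by
    obtain ⟨N, hN⟩ := (hlip (ε / 3) (by positivity)).exists_forall_of_atTop
    refine ⟨N, fun n hn ↦ ?_⟩
    have hd := ((hfs n).hasDerivAt.sub (hfs N).hasDerivAt).le_of_lip' (C := ε / 3 + ε / 3)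
      (by positivity) <| ((hN n hn).and (hN N le_rfl)).mono fun y ⟨hn, hN⟩ ↦ by
        calc ‖fs n y - fs N y - (fs n x - fs N x)‖
            = ‖((f y - fs N y) - (f x - fs N x)) - ((f y - fs n y) - (f x - fs n x))‖ := by
              congr 1; abel
          _ ≤ ε / 3 * ‖y - x‖ + ε / 3 * ‖y - x‖ := (norm_sub_le _ _).trans (add_le_add hN hn)
          _ = (ε / 3 + ε / 3) * ‖y - x‖ := by ring
    rw [dist_eq_norm]
    linarith
  obtain ⟨L, hL⟩ := cauchySeq_tendsto_of_complete hcauchy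
  suffices HasDerivAt f L x from this.differentiableAt
  refine hasDerivAt_iff_isLittleO.2 <| Asymptotics.IsLittleO.of_bound fun c hc ↦ ?_
  obtain ⟨n, hn, hnL⟩ := ((hlip (c / 3) (by positivity)).and
    (hL.eventually (closedBall_mem_nhds L (by positivity : 0 < c / 3)))).exists
  filter_upwards [hn, (hfs n).hasDerivAt.isLittleO.bound (by positivity : 0 < c / 3)] with y h₁ h₂
  rw [dist_eq_norm] at hnL
  calc ‖f y - f x - (y - x) • L‖
      = ‖((f y - fs n y) - (f x - fs n x)) + (fs n y - fs n x - (y - x) • d n)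
          + (y - x) • (d n - L)‖ := by congr 1; simp only [smul_sub]; abel
    _ ≤ c / 3 * ‖y - x‖ + c / 3 * ‖y - x‖ + ‖y - x‖ * (c / 3) := by
      refine (norm_add₃_le).trans (add_le_add (add_le_add h₁ h₂) ?_)
      rw [norm_smul]; gcongr
    _ = c * ‖y - x‖ := by ring

theorem Filter.Tendsto.update_nat {β : Type*} [TopologicalSpace β] {f : ℕ → β} {y : β}
    (h : Tendsto f atTop (𝓝 y)) (k : ℕ) (x : β) :
    Tendsto (Function.update f k x) atTop (𝓝 y) :=
  h.congr' (Nat.cofinite_eq_atTop ▸ (Function.update_eventuallyEq_cofinite f k x).symm)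

def weierstrassProd {K : Type*} [NormedField K] (b : ℕ → K) (z : K) : K :=
  ∏' i, (1 - z * b i)

section WeierstrassProd

variable {K : Type*} [NormedField K] [IsUltrametricDist K] {b : ℕ → K} {ρ : ℝ} {N : ℕ}

theorem diskLipBound_one_sub_mul (a : K) :
    DiskLipBound ρ (max 1 (ρ * ‖a‖)) fun z ↦ 1 - z * a :=
  ((DiskLipBound.const norm_one.le).mono (le_max_left _ _)).sub
    ((DiskLipBound.id.mul (DiskLipBound.const le_rfl)).mono (le_max_right _ _))

theorem diskLipBound_prod_range (hN : ∀ i, N ≤ i → ρ * ‖b i‖ ≤ 1) (n : ℕ) :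
    DiskLipBound ρ (∏ i ∈ range N, max 1 (ρ * ‖b i‖)) fun z ↦ ∏ i ∈ range n, (1 - z * b i) := by
  refine (DiskLipBound.finsetProd _ fun i _ ↦ diskLipBound_one_sub_mul (b i)).mono ?_
  calc ∏ i ∈ range n, max 1 (ρ * ‖b i‖) ≤ ∏ i ∈ range (max n N), max 1 (ρ * ‖b i‖) :=
        prod_le_prod_of_subset_of_one_le (range_subset_range.2 (le_max_left _ _))
          (fun _ _ ↦ zero_le_one.trans (le_max_left _ _)) fun _ _ _ ↦ le_max_left _ _
    _ = ∏ i ∈ range N, max 1 (ρ * ‖b i‖) :=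
        (prod_subset (range_subset_range.2 (le_max_right _ _)) fun i _ hi ↦
          max_eq_left (hN i (by simpa using hi))).symm

variable [CompleteSpace K]

theorem multipliable_one_sub_mul (hb : Tendsto b atTop (𝓝 0)) (z : K) :
    Multipliable fun i ↦ 1 - z * b i :=
  multipliable_of_tendsto_cofinite_one <| by
    rw [Nat.cofinite_eq_atTop]
    simpa using tendsto_const_nhds.sub (hb.const_mul z)

theorem weierstrassProd_eq_mul_update (hb : Tendsto b atTop (𝓝 0)) (k : ℕ) (z : K) :
    weierstrassProd b z = (1 - z * b k) * weierstrassProd (Function.update b k 0) z := by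
  classical
  unfold weierstrassProd
  rw [Multipliable.tprod_eq_mul_tprod_ite' k]
  · congr 1
    exact tprod_congr fun i ↦ by by_cases h : i = k <;> simp [h]
  · convert multipliable_one_sub_mul (hb.update_nat k 0) z using 1
    funext i
    by_cases h : i = k <;> simp [h]

theorem norm_weierstrassProd (hb : Tendsto b atTop (𝓝 0)) {z : K} (hz : ∀ i, ‖z * b i‖ ≠ 1)
    (hN : ∀ i, N ≤ i → ‖z * b i‖ < 1) :
    ‖weierstrassProd b z‖ = ∏ i ∈ range N, max 1 ‖z * b i‖ := by
  have hfac : ∀ i, ‖1 - z * b i‖ = max 1 ‖z * b i‖ := fun i ↦ by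
    rw [sub_eq_add_neg, norm_add_eq_max_of_norm_ne_norm, norm_one, norm_neg]
    simpa [eq_comm] using hz i
  rw [weierstrassProd, (multipliable_one_sub_mul hb z).norm_tprod_eq_prod_range
    fun i hi ↦ by rw [hfac, max_eq_left (hN i hi).le]]
  exact prod_congr rfl fun i _ ↦ hfac i

theorem one_le_norm_weierstrassProd (hb : Tendsto b atTop (𝓝 0)) {z : K}
    (h : ∀ i, 1 ≤ ‖1 - z * b i‖) : 1 ≤ ‖weierstrassProd b z‖ := by
  have hzb : Tendsto (fun i ↦ z * b i) atTop (𝓝 0) := by simpa using hb.const_mul z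
  obtain ⟨N, hN⟩ := (hzb.eventually (ball_mem_nhds 0 one_pos)).exists_forall_of_atTop
  rw [weierstrassProd, (multipliable_one_sub_mul hb z).norm_tprod_eq_prod_range (N := N)
    fun i hi ↦ norm_eq_one_of_norm_sub_one_lt_one (by simpa using hN i hi)]
  exact one_le_prod fun i _ ↦ h i

theorem diskLipBound_weierstrassProd (hb : Tendsto b atTop (𝓝 0))
    (hN : ∀ i, N ≤ i → ρ * ‖b i‖ ≤ 1) :
    DiskLipBound ρ (∏ i ∈ range N, max 1 (ρ * ‖b i‖)) (weierstrassProd b) :=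
  .of_tendsto (Eventually.of_forall (diskLipBound_prod_range hN)) fun z _ ↦
    (multipliable_one_sub_mul hb z).hasProd.tendsto_prod_nat

theorem diskLipBound_weierstrassProd_sub_prod_range (hb : Tendsto b atTop (𝓝 0))
    (hN : ∀ i, N ≤ i → ρ * ‖b i‖ ≤ 1) {n : ℕ} {δ : ℝ} (hδ : 0 ≤ δ)
    (hn : ∀ i, n ≤ i → ρ * ‖b i‖ ≤ δ) :
    DiskLipBound ρ ((∏ i ∈ range N, max 1 (ρ * ‖b i‖)) * δ)
      fun z ↦ weierstrassProd b z - ∏ i ∈ range n, (1 - z * b i) := by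
  have hM : 0 ≤ ∏ i ∈ range N, max 1 (ρ * ‖b i‖) :=
    prod_nonneg fun i _ ↦ zero_le_one.trans (le_max_left _ _)
  -- the difference telescopes into the terms `(∏_{i<k} (1 - z b_i)) · (-z b_k)`, `k ≥ n`
  refine .of_tendsto (l := atTop)
    (gs := fun m z ↦ ∑ k ∈ Ico n m, (∏ i ∈ range k, (1 - z * b i)) * -(z * b k))
    (.of_forall fun m ↦ .finsetSum _ (by positivity) fun k hk ↦ ?_) fun z _ ↦ ?_
  · exact ((diskLipBound_prod_range hN k).mul (DiskLipBound.id.mul (.const le_rfl)).neg).mono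
      (mul_le_mul_of_nonneg_left (hn k (mem_Ico.1 hk).1) hM)
  · have hstep : ∀ k, (∏ i ∈ range k, (1 - z * b i)) * -(z * b k)
        = ∏ i ∈ range (k + 1), (1 - z * b i) - ∏ i ∈ range k, (1 - z * b i) := fun k ↦ by
      rw [prod_range_succ]; ring
    refine ((multipliable_one_sub_mul hb z).hasProd.tendsto_prod_nat.sub_const _).congr' ?_
    filter_upwards [eventually_ge_atTop n] with m hm
    simp only [hstep]
    rw [sum_Ico_eq_sub _ hm, sum_range_sub (fun k ↦ ∏ i ∈ range k, (1 - z * b i)),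
      sum_range_sub (fun k ↦ ∏ i ∈ range k, (1 - z * b i)), sub_sub_sub_cancel_right]

end WeierstrassProd

theorem differentiable_weierstrassProd {K : Type*} [NontriviallyNormedField K]
    [IsUltrametricDist K] [CompleteSpace K] {b : ℕ → K} (hb : Tendsto b atTop (𝓝 0)) :
    Differentiable K (weierstrassProd b) := by
  intro x
  set ρ := ‖x‖ + 1
  have hρ : 0 < ρ := by positivity
  have hsmall : ∀ δ > 0, ∃ N, ∀ i, N ≤ i → ρ * ‖b i‖ ≤ δ := fun δ hδ ↦ by
    have : Tendsto (fun i ↦ ρ * ‖b i‖) atTop (𝓝 0) := by simpa using hb.norm.const_mul ρ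
    exact (this.eventually (ge_mem_nhds hδ)).exists_forall_of_atTop
  obtain ⟨N₀, hN₀⟩ := hsmall 1 one_pos
  set M := ∏ i ∈ range N₀, max 1 (ρ * ‖b i‖)
  have hM : 0 < M := prod_pos fun i _ ↦ one_pos.trans_le (le_max_left _ _)
  refine differentiableAt_of_lipschitz_approx (fs := fun n z ↦ ∏ i ∈ range n, (1 - z * b i))
    (fun n ↦ by fun_prop) fun ε hε ↦ ?_
  obtain ⟨N, hN⟩ := hsmall (ε * ρ / M) (by positivity)
  filter_upwards [eventually_ge_atTop N] with n hn
  have htail := diskLipBound_weierstrassProd_sub_prod_range hb hN₀ (by positivity)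
    fun i hi ↦ hN i (hn.trans hi)
  rw [mul_div_cancel₀ _ hM.ne'] at htail
  filter_upwards [closedBall_mem_nhds_of_mem (mem_ball_zero_iff.2 (lt_add_one ‖x‖))] with y hy
  refine le_of_mul_le_mul_left ?_ hρ
  calc ρ * ‖_‖ ≤ ε * ρ * ‖y - x‖ := htail.lip x y (le_add_of_nonneg_right zero_le_one)
        (mem_closedBall_zero_iff.1 hy)
    _ = ρ * (ε * ‖y - x‖) := by ring

structure IsScalingOnBall {K : Type*} [NormedField K] (f G : K → K) (a : K) (ρ κ : ℝ) : Prop where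
  eq_mul : ∀ z ∈ ball a ρ, f z = G z * (z - a)
  norm_eq : ∀ z ∈ ball a ρ, ‖G z‖ = κ
  lip : ∀ y ∈ ball a ρ, ∀ z ∈ ball a ρ, ρ * ‖G z - G y‖ ≤ κ * ‖z - y‖

namespace IsScalingOnBall

variable {K : Type*} [NormedField K] {f G : K → K} {a : K} {ρ κ : ℝ}

theorem norm_sub_mul_le (h : IsScalingOnBall f G a ρ κ) (hκ : 0 < κ) {y z : K}
    (hy : y ∈ ball a ρ) (hz : z ∈ ball a ρ) {t : K} {r : ℝ}
    (hr : ‖z - y‖ * ‖t‖ ≤ ρ / κ * r) : ‖(G z - G y) * t‖ ≤ r := by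
  have hρ : 0 < ρ := pos_of_mem_ball hy
  refine le_of_mul_le_mul_left ?_ hρ
  calc ρ * ‖(G z - G y) * t‖ = ρ * ‖G z - G y‖ * ‖t‖ := by rw [norm_mul, mul_assoc]
    _ ≤ κ * ‖z - y‖ * ‖t‖ := mul_le_mul_of_nonneg_right (h.lip y hy z hz) (norm_nonneg t)
    _ ≤ κ * (ρ / κ * r) := by rw [mul_assoc]; gcongr
    _ = ρ * r := by field_simp

variable [IsUltrametricDist K]

theorem norm_sub_eq_of_fixed (h : IsScalingOnBall f G a ρ κ) (ha : ‖a‖ = ρ) (hκ : 0 < κ) {w : K}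
    (hw : w ∈ ball a ρ) (hfw : f w = w) : ‖w - a‖ = ρ / κ := by
  have hw' : ‖w‖ = ρ := ha ▸ norm_eq_of_norm_sub_lt (by rwa [ha, ← dist_eq_norm])
  rw [eq_div_iff hκ.ne', ← h.norm_eq w hw, ← norm_mul, mul_comm, ← h.eq_mul w hw, hfw, hw']

theorem norm_sub_eq_mul (h : IsScalingOnBall f G a ρ κ) (hκ : 1 < κ) {w z : K}
    (hw : w ∈ closedBall a (ρ / κ)) (hz : z ∈ ball a ρ) : ‖f z - f w‖ = κ * ‖z - w‖ := by
  have hw' : w ∈ ball a ρ := closedBall_subset_ball (div_lt_self (pos_of_mem_ball hz) hκ) hw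
  rcases eq_or_ne z w with rfl | hzw
  · simp
  have hsmall : ‖(G z - G w) * (w - a)‖ < ‖G z * (z - w)‖ := by
    rw [norm_mul _ (z - w), h.norm_eq z hz]
    refine (h.norm_sub_mul_le (by linarith) hw' hz (r := ‖z - w‖) ?_).trans_lt ?_
    · rw [mul_comm (ρ / κ)]; gcongr; rwa [← dist_eq_norm, ← mem_closedBall]
    · exact lt_mul_left (norm_pos_iff.2 (sub_ne_zero.2 hzw)) hκ
  rw [h.eq_mul z hz, h.eq_mul w hw', show G z * (z - a) - G w * (w - a)
    = (G z - G w) * (w - a) + G z * (z - w) by ring, norm_add_eq_max_of_norm_ne_norm hsmall.ne,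
    max_eq_right hsmall.le, norm_mul, h.norm_eq z hz]

theorem norm_sub_one_eq (h : IsScalingOnBall f G a ρ κ) (hρ : 0 < ρ) (hκ : 1 < κ) :
    ‖G a - 1‖ = κ := by
  rw [sub_eq_add_neg, norm_add_eq_max_of_norm_ne_norm] <;>
    simp [h.norm_eq a (mem_ball_self hρ), hκ.le, hκ.ne']

theorem norm_newton_sub_le (h : IsScalingOnBall f G a ρ κ) (hρ : 0 < ρ) (hκ : 1 < κ) {y z : K}
    (hy : y ∈ closedBall a (ρ / κ)) (hz : z ∈ closedBall a (ρ / κ)) :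
    ‖(z - (f z - z) / (G a - 1)) - (y - (f y - y) / (G a - 1))‖ ≤ κ⁻¹ * ‖z - y‖ := by
  have hκ₀ : 0 < κ := one_pos.trans hκ
  have hsub : closedBall a (ρ / κ) ⊆ ball a ρ := closedBall_subset_ball (div_lt_self hρ hκ)
  have hc := h.norm_sub_one_eq hρ hκ
  have key : (z - (f z - z) / (G a - 1)) - (y - (f y - y) / (G a - 1))
      = ((G a - G z) * (z - y) + (G y - G z) * (y - a)) / (G a - 1) := by
    rw [h.eq_mul z (hsub hz), h.eq_mul y (hsub hy)]
    field_simp [norm_ne_zero_iff.1 (hc ▸ hκ₀.ne')]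
    ring
  have hyρ := hsub hy
  have hzρ := hsub hz
  rw [mem_closedBall, dist_eq_norm] at hy hz
  rw [key, norm_div, hc, inv_mul_eq_div]
  gcongr
  refine (norm_add_le_max _ _).trans (max_le ?_ ?_)
  · refine h.norm_sub_mul_le hκ₀ hzρ (mem_ball_self hρ) ?_
    rw [norm_sub_rev]
    gcongr
  · refine h.norm_sub_mul_le hκ₀ hzρ hyρ ?_
    rw [norm_sub_rev y z, mul_comm]
    gcongr

theorem exists_fixed [CompleteSpace K] (h : IsScalingOnBall f G a ρ κ) (ha : ‖a‖ ≤ ρ) (hρ : 0 < ρ)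
    (hκ : 1 < κ) : ∃ w ∈ closedBall a (ρ / κ), f w = w := by
  have hκ₀ : 0 < κ := one_pos.trans hκ
  have hc := h.norm_sub_one_eq hρ hκ
  have haρ : a ∈ closedBall a (ρ / κ) := mem_closedBall_self (by positivity)
  -- a Newton-type step, with the slope of `z ↦ f z - z` frozen at its value `G a - 1` at `a`
  set Φ : K → K := fun w ↦ w - (f w - w) / (G a - 1)
  have hmaps : Set.MapsTo Φ (closedBall a (ρ / κ)) (closedBall a (ρ / κ)) := fun w hw ↦ by
    have hΦa : ‖Φ a - a‖ ≤ ρ / κ := by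
      simp only [Φ, h.eq_mul a (mem_ball_self hρ), sub_self, mul_zero, zero_sub,
        sub_sub_cancel_left, norm_neg, norm_div, hc]
      gcongr
    have hΦw : ‖Φ w - Φ a‖ ≤ ρ / κ := by
      refine (h.norm_newton_sub_le hρ hκ haρ hw).trans ?_
      rw [mem_closedBall, dist_eq_norm] at hw
      calc κ⁻¹ * ‖w - a‖ ≤ 1 * (ρ / κ) := by gcongr; exact inv_le_one_of_one_le₀ hκ.le
        _ = ρ / κ := one_mul _
    rw [mem_closedBall, dist_eq_norm, ← sub_add_sub_cancel _ (Φ a)]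
    exact (norm_add_le_max _ _).trans (max_le hΦw hΦa)
  have hcontr : ContractingWith κ⁻¹.toNNReal (hmaps.restrict Φ _ _) := by
    refine ⟨Real.toNNReal_lt_one.2 (inv_lt_one_of_one_lt₀ hκ), .of_dist_le_mul fun y z ↦ ?_⟩
    rw [Real.coe_toNNReal _ (inv_nonneg.2 hκ₀.le), Subtype.dist_eq, Subtype.dist_eq,
      dist_eq_norm, dist_eq_norm]
    exact h.norm_newton_sub_le hρ hκ z.2 y.2
  obtain ⟨w, hw, hΦw, -⟩ := hcontr.exists_fixedPoint' isClosed_closedBall.isComplete hmaps haρ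
    (edist_ne_top _ _)
  refine ⟨w, hw, ?_⟩
  simpa [Function.IsFixedPt, Φ, norm_ne_zero_iff.1 (hc ▸ hκ₀.ne'), sub_eq_zero] using hΦw

theorem existsUnique_fixed [CompleteSpace K] (h : IsScalingOnBall f G a ρ κ) (ha : ‖a‖ = ρ)
    (hρ : 0 < ρ) (hκ : 1 < κ) : ∃! w, w ∈ ball a ρ ∧ f w = w := by
  obtain ⟨w, hw, hfw⟩ := h.exists_fixed ha.le hρ hκ
  refine ⟨w, ⟨closedBall_subset_ball (div_lt_self hρ hκ) hw, hfw⟩, fun v ⟨hv, hfv⟩ ↦ ?_⟩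
  have hvw := h.norm_sub_eq_mul hκ hw hv
  rw [hfv, hfw] at hvw
  have : ‖v - w‖ = 0 := by nlinarith [norm_nonneg (v - w)]
  exact sub_eq_zero.1 (norm_eq_zero.1 this)

end IsScalingOnBall

theorem IsScalingOnBall.norm_deriv_eq {K : Type*} [NontriviallyNormedField K]
    [IsUltrametricDist K] {f G : K → K} {a : K} {ρ κ : ℝ} (h : IsScalingOnBall f G a ρ κ)
    (ha : ‖a‖ = ρ) (hκ : 1 < κ) {w : K} (hw : w ∈ ball a ρ) (hfw : f w = w)
    (hd : DifferentiableAt K f w) : ‖deriv f w‖ = κ := by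
  have hw' : w ∈ closedBall a (ρ / κ) := by
    rw [mem_closedBall, dist_eq_norm, h.norm_sub_eq_of_fixed ha (by linarith) hw hfw]
  have hslope : ∀ᶠ z in 𝓝[≠] w, ‖slope f w z‖ = κ := by
    filter_upwards [self_mem_nhdsWithin, nhdsWithin_le_nhds (isOpen_ball.mem_nhds hw)]
      with z hz hzb
    rw [slope_def_field, norm_div, h.norm_sub_eq_mul hκ hw' hzb,
      mul_div_assoc, div_self (norm_ne_zero_iff.2 (sub_ne_zero.2 hz)), mul_one]
  exact tendsto_nhds_unique (hasDerivAt_iff_tendsto_slope.1 hd.hasDerivAt).norm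
    (tendsto_const_nhds.congr' (hslope.mono fun _ h ↦ h.symm))

namespace IsRadii

variable {p : ℕ} {R : ℕ → ℝ}

theorem lt (hR : IsRadii p R) {i k : ℕ} (hi : 1 ≤ i) (hik : i < k) : R i < R k := by
  have hmono : StrictMono fun n ↦ R (n + 1) := strictMono_nat_of_lt_succ fun n ↦ hR.1 _ (by omega)
  simpa [Nat.sub_add_cancel hi, Nat.sub_add_cancel (hi.trans hik.le)] using
    hmono (Nat.sub_lt_sub_right hi hik)

theorem natCast_lt (hR : IsRadii p R) {i : ℕ} (hi : 1 ≤ i) : (p : ℝ) < R i := by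
  rcases hi.eq_or_lt with rfl | h
  · exact hR.2.1
  · exact hR.2.1.trans (hR.lt le_rfl h)

theorem pos (hR : IsRadii p R) {i : ℕ} (hi : 1 ≤ i) : 0 < R i :=
  (Nat.cast_nonneg p).trans_lt (hR.natCast_lt hi)

theorem phi_eq (hR : IsRadii p R) {j : ℕ} (hj : 1 ≤ j) :
    phi p R (R j) = p * R j ^ p * ∏ i ∈ range (j - 1), (R j / R (i + 1)) := by
  have hinf : sInf {k | 1 ≤ k ∧ R j ≤ R k} = j :=
    le_antisymm (Nat.sInf_le ⟨hj, le_rfl⟩) (le_csInf ⟨j, hj, le_rfl⟩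
      fun k ⟨hk, hjk⟩ ↦ not_lt.1 fun hkj ↦ (hjk.trans_lt (hR.lt hk hkj)).false)
  have hprod : ∏ i ∈ Icc 1 (j - 1), R i = ∏ i ∈ range (j - 1), R (i + 1) := by
    rw [range_eq_Ico, prod_Ico_add' R 0 (j - 1) 1]
    congr 1
  simp only [phi, hinf, hprod, prod_div_distrib, prod_const, card_range]
  rw [show p + j - 1 = p + (j - 1) by omega, pow_add]
  ring

theorem one_lt_phi_div (hR : IsRadii p R) (hp : 1 < p) {j : ℕ} (hj : 1 ≤ j) :
    1 < phi p R (R j) / R j := by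
  have hp' : (1 : ℝ) < p := by exact_mod_cast hp
  have hRj : 1 < R j := hp'.trans (hR.natCast_lt hj)
  have hpow : 1 ≤ R j ^ p / R j := by
    rw [le_div_iff₀ (hR.pos hj), one_mul]
    exact le_self_pow₀ hRj.le (by omega)
  have hprod : 1 ≤ ∏ i ∈ range (j - 1), (R j / R (i + 1)) := one_le_prod fun i hi ↦
    (one_le_div (hR.pos (by omega))).2 (hR.lt (by omega) (by simp at hi; omega)).le
  rw [hR.phi_eq hj]
  calc (1 : ℝ) < p * 1 * 1 := by simpa using hp'
    _ ≤ p * (R j ^ p / R j) * ∏ i ∈ range (j - 1), (R j / R (i + 1)) := by gcongr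
    _ = p * R j ^ p * (∏ i ∈ range (j - 1), (R j / R (i + 1))) / R j := by ring

end IsRadii

section FixedPoints

variable {p : ℕ} {K : Type*} [NontriviallyNormedField K] {R : ℕ → ℝ} {c : ℕ → K}

-- `i ↦ c_{i+1}⁻¹` with the entry of `c_j` replaced by `0`, whose factor `1 - z * 0` drops out
def deletedInvRoots (c : ℕ → K) (j : ℕ) : ℕ → K :=
  Function.update (fun i ↦ (c (i + 1))⁻¹) (j - 1) 0

theorem fc_eq_weierstrassProd (z : K) :
    fc p c z = z ^ p / p * weierstrassProd (fun i ↦ (c (i + 1))⁻¹) z := by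
  simp [fc, weierstrassProd, div_eq_mul_inv]

variable [Fact p.Prime]

theorem tendsto_inv_roots (hR : IsRadii p R) (hc : InC p R c) :
    Tendsto (fun i ↦ (c (i + 1))⁻¹) atTop (𝓝 0) := by
  rw [tendsto_zero_iff_norm_tendsto_zero]
  refine (hR.2.2.comp (tendsto_add_atTop_nat 1)).inv_tendsto_atTop.congr fun i ↦ ?_
  simp [hc (i + 1) (by omega)]

theorem tendsto_deletedInvRoots (hR : IsRadii p R) (hc : InC p R c) (j : ℕ) :
    Tendsto (deletedInvRoots c j) atTop (𝓝 0) :=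
  (tendsto_inv_roots hR hc).update_nat _ _

theorem radius_mul_norm_deletedInvRoots (hc : InC p R c) (j i : ℕ) :
    R j * ‖deletedInvRoots c j i‖ = if i = j - 1 then 0 else R j / R (i + 1) := by
  split_ifs with hi
  · simp [deletedInvRoots, hi]
  · simp [deletedInvRoots, Function.update_of_ne hi, hc (i + 1) (by omega), div_eq_mul_inv]

theorem radius_mul_norm_deletedInvRoots_lt_one (hR : IsRadii p R) (hc : InC p R c) {j i : ℕ}
    (hj : 1 ≤ j) (hi : j - 1 ≤ i) : R j * ‖deletedInvRoots c j i‖ < 1 := by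
  rw [radius_mul_norm_deletedInvRoots hc]
  split_ifs
  · exact one_pos
  · exact (div_lt_one (hR.pos (by omega))).2 (hR.lt hj (by omega))

theorem one_lt_radius_mul_norm_deletedInvRoots (hR : IsRadii p R) (hc : InC p R c) {j i : ℕ}
    (hi : i < j - 1) : 1 < R j * ‖deletedInvRoots c j i‖ := by
  rw [radius_mul_norm_deletedInvRoots hc, if_neg hi.ne]
  exact (one_lt_div (hR.pos (by omega))).2 (hR.lt (by omega) (by omega))

theorem prod_max_one_radius_mul_norm_deletedInvRoots (hR : IsRadii p R) (hc : InC p R c)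
    (j : ℕ) : ∏ i ∈ range (j - 1), max 1 (R j * ‖deletedInvRoots c j i‖)
      = ∏ i ∈ range (j - 1), (R j / R (i + 1)) :=
  prod_congr rfl fun i hi ↦ by
    have hi := mem_range.1 hi
    rw [max_eq_right (one_lt_radius_mul_norm_deletedInvRoots hR hc hi).le,
      radius_mul_norm_deletedInvRoots hc, if_neg hi.ne]

variable [IsUltrametricDist K] [CompleteSpace K]

theorem differentiable_fc (hR : IsRadii p R) (hc : InC p R c) : Differentiable K (fc p c) := by
  have := differentiable_weierstrassProd (tendsto_inv_roots hR hc)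
  simp_rw [funext fc_eq_weierstrassProd]
  fun_prop

theorem norm_lt_norm_fc (hR : IsRadii p R) (hc : InC p R c) (hpK : ‖(p : K)‖ = (p : ℝ)⁻¹)
    {z : K} (hz : z ∉ ⋃ j, Bset R c j) : ‖z‖ < ‖fc p c z‖ := by
  simp only [Set.mem_iUnion, not_exists, Bset] at hz
  have hz₀ : 1 ≤ ‖z‖ := by simpa using hz 0
  have hfac : ∀ i, 1 ≤ ‖1 - z * (c (i + 1))⁻¹‖ := fun i ↦ by
    have hci := hc (i + 1) (by omega)
    have hci₀ : c (i + 1) ≠ 0 := norm_pos_iff.1 (hci ▸ hR.pos (by omega))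
    rw [← div_self hci₀, ← div_eq_mul_inv, ← sub_div, norm_div, norm_sub_rev, hci,
      one_le_div (hR.pos (by omega))]
    simpa using hz (i + 1)
  have hp : 1 < p := (Fact.out : p.Prime).one_lt
  rw [fc_eq_weierstrassProd, norm_mul, norm_div, norm_pow, hpK, div_inv_eq_mul]
  calc ‖z‖ < p * ‖z‖ := lt_mul_left (by positivity) (by exact_mod_cast hp)
    _ ≤ ‖z‖ ^ p * p * 1 := by
      rw [mul_one, mul_comm]; gcongr; exact le_self_pow₀ hz₀ (by omega)
    _ ≤ ‖z‖ ^ p * p * ‖weierstrassProd (fun i ↦ (c (i + 1))⁻¹) z‖ := by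
      gcongr; exact one_le_norm_weierstrassProd (tendsto_inv_roots hR hc) hfac

theorem diskLipBound_weierstrassProd_deleted (hR : IsRadii p R) (hc : InC p R c) {j : ℕ}
    (hj : 1 ≤ j) : DiskLipBound (R j) (∏ i ∈ range (j - 1), (R j / R (i + 1)))
      (weierstrassProd (deletedInvRoots c j)) := by
  rw [← prod_max_one_radius_mul_norm_deletedInvRoots hR hc]
  exact diskLipBound_weierstrassProd (tendsto_deletedInvRoots hR hc j)
    fun i hi ↦ (radius_mul_norm_deletedInvRoots_lt_one hR hc hj hi).le

theorem norm_weierstrassProd_deleted (hR : IsRadii p R) (hc : InC p R c) {j : ℕ} (hj : 1 ≤ j)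
    {z : K} (hz : ‖z‖ = R j) :
    ‖weierstrassProd (deletedInvRoots c j) z‖ = ∏ i ∈ range (j - 1), (R j / R (i + 1)) := by
  have hzb : ∀ i, ‖z * deletedInvRoots c j i‖ = R j * ‖deletedInvRoots c j i‖ := fun i ↦ by
    rw [norm_mul, hz]
  have hne : ∀ i, ‖z * deletedInvRoots c j i‖ ≠ 1 := fun i ↦ by
    rw [hzb]
    rcases lt_or_ge i (j - 1) with hi | hi
    · exact (one_lt_radius_mul_norm_deletedInvRoots hR hc hi).ne'
    · exact (radius_mul_norm_deletedInvRoots_lt_one hR hc hj hi).ne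
  rw [norm_weierstrassProd (tendsto_deletedInvRoots hR hc j) hne fun i hi ↦
    hzb i ▸ radius_mul_norm_deletedInvRoots_lt_one hR hc hj hi]
  simp only [hzb, prod_max_one_radius_mul_norm_deletedInvRoots hR hc]

theorem isScalingOnBall_fc (hR : IsRadii p R) (hc : InC p R c) (hpK : ‖(p : K)‖ = (p : ℝ)⁻¹)
    {j : ℕ} (hj : 1 ≤ j) :
    IsScalingOnBall (fc p c)
      (fun z ↦ z ^ p * (p : K)⁻¹ * weierstrassProd (deletedInvRoots c j) z * -(c j)⁻¹)
      (c j) (R j) (phi p R (R j) / R j) := by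
  have hcj : ‖c j‖ = R j := hc j hj
  have hcj₀ : c j ≠ 0 := norm_ne_zero_iff.1 (hcj ▸ (hR.pos hj).ne')
  have hnorm : ∀ z ∈ ball (c j) (R j), ‖z‖ = R j := fun z hz ↦
    hcj ▸ norm_eq_of_norm_sub_lt (by rwa [hcj, ← dist_eq_norm])
  have hphi : phi p R (R j) / R j
      = R j ^ p * p * (∏ i ∈ range (j - 1), (R j / R (i + 1))) * (R j)⁻¹ := by
    rw [hR.phi_eq hj]; ring
  refine ⟨fun z _ ↦ ?_, fun z hz ↦ ?_, fun y hy z hz ↦ ?_⟩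
  · rw [fc_eq_weierstrassProd, weierstrassProd_eq_mul_update (tendsto_inv_roots hR hc) (j - 1),
      Nat.sub_add_cancel hj, div_eq_mul_inv, ← deletedInvRoots]
    linear_combination (-(z ^ p * (p : K)⁻¹ * weierstrassProd (deletedInvRoots c j) z)) *
      inv_mul_cancel₀ hcj₀
  · rw [norm_mul, norm_mul, norm_mul, norm_neg, norm_inv, norm_inv, hpK, hcj, norm_pow,
      hnorm z hz, norm_weierstrassProd_deleted hR hc hj (hnorm z hz), hphi, inv_inv]
  · have hG := (((DiskLipBound.pow p).mul (DiskLipBound.const (a := (p : K)⁻¹) le_rfl)).mul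
      (diskLipBound_weierstrassProd_deleted hR hc hj)).mul
      (DiskLipBound.const (a := -(c j)⁻¹) le_rfl)
    rw [norm_neg, norm_inv, norm_inv, hpK, hcj, inv_inv, ← hphi] at hG
    exact hG.lip y z (hnorm y hy).le (hnorm z hz).le

end FixedPoints

/-- **Proposition 3.2** (fixed points). Every classical fixed point of `f_c` lies in some
disk `B_j` (`j ≥ 0`); each `B_j` with `j ≥ 1` contains exactly one fixed point, which is
repelling with multiplier of absolute value `φ(R_j)/R_j > 1`. -/
theorem fixed_points
    (p : ℕ) [Fact p.Prime] (K : Type*) [NontriviallyNormedField K] [Algebra ℚ_[p] K]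
    (hK : IsCp p K) (R : ℕ → ℝ) (hR : IsGenericRadii p R)
    (c : ℕ → K) (hc : InC p R c) :
    (∀ z : K, fc p c z = z → z ∈ ⋃ j : ℕ, Bset R c j) ∧
    (∀ j, 1 ≤ j →
      (∃! w : K, ‖w - c j‖ < R j ∧ fc p c w = w) ∧
      (∀ w : K, ‖w - c j‖ < R j → fc p c w = w →
        ‖deriv (fc p c) w‖ = phi p R (R j) / R j ∧ 1 < phi p R (R j) / R j)) := by
  have := hK.complete
  have : IsUltrametricDist K := .isUltrametricDist_of_forall_norm_add_le_max_norm hK.isNonarch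
  have hpK : ‖(p : K)‖ = (p : ℝ)⁻¹ := by
    rw [← map_natCast (algebraMap ℚ_[p] K), hK.norm_extends, Padic.norm_p]
  obtain ⟨hR, -⟩ := hR
  refine ⟨fun z hz ↦ ?_, fun j hj ↦ ?_⟩
  · by_contra h
    exact (norm_lt_norm_fc hR hc hpK h).ne' (by rw [hz])
  · have hS := isScalingOnBall_fc hR hc hpK hj
    have hκ := hR.one_lt_phi_div (Fact.out : p.Prime).one_lt hj
    simp only [← mem_ball_iff_norm]
    exact ⟨hS.existsUnique_fixed (hc j hj) (hR.pos hj) hκ, fun w hw hfw ↦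
      ⟨hS.norm_deriv_eq (hc j hj) hκ hw hfw (differentiable_fc hR hc w), hκ⟩⟩

end
end
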